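/- arXiv:2508.21038 — 3 statements merged into one kernel-verified Lean document; each statement's English description precedes it below -/
import Mathlib

section
/- For every binary matrix A ∈ {0,1}^{m×n}, the following chain of inequalities holds: rank_±(2A − 1_{m×n}) − 1 ≤ rank_rop A = rank_rt A ≤ rank_gt A ≤ rank_±(2A − 1_{m×n}). -/
open Matrix

/-- `A` is a binary (0/1) matrix. -/
def IsBinary {m n : ℕ} (A : Matrix (Fin m) (Fin n) ℝ) : Prop :=
  ∀ i j, A i j = 0 ∨ A i j = 1

/-- `B` is row-wise order-preserving for `A`. -/
def RowOP {m n : ℕ} (A B : Matrix (Fin m) (Fin n) ℝ) : Prop :=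
  ∀ i j k, A i j > A i k → B i j > B i k

/-- `B` is row-wise thresholdable for `A` with row thresholds `τ`. -/
def RowThreshWith {m n : ℕ} (A B : Matrix (Fin m) (Fin n) ℝ) (τ : Fin m → ℝ) : Prop :=
  ∀ i j, (A i j = 1 → B i j > τ i) ∧ (A i j = 0 → B i j < τ i)

/-- `B` is globally thresholdable for `A` with threshold `τ`. -/
def GlobThreshWith {m n : ℕ} (A B : Matrix (Fin m) (Fin n) ℝ) (τ : ℝ) : Prop :=
  ∀ i j, (A i j = 1 → B i j > τ) ∧ (A i j = 0 → B i j < τ)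

/-- Row-wise order-preserving rank of `A`. -/
noncomputable def ropRank {m n : ℕ} (A : Matrix (Fin m) (Fin n) ℝ) : ℕ :=
  sInf { r | ∃ B : Matrix (Fin m) (Fin n) ℝ, RowOP A B ∧ B.rank = r }

/-- Row-wise thresholdable rank of `A`. -/
noncomputable def rtRank {m n : ℕ} (A : Matrix (Fin m) (Fin n) ℝ) : ℕ :=
  sInf { r | ∃ (B : Matrix (Fin m) (Fin n) ℝ) (τ : Fin m → ℝ),
    RowThreshWith A B τ ∧ B.rank = r }

/-- Globally thresholdable rank of `A`. -/
noncomputable def gtRank {m n : ℕ} (A : Matrix (Fin m) (Fin n) ℝ) : ℕ :=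
  sInf { r | ∃ (B : Matrix (Fin m) (Fin n) ℝ) (τ : ℝ),
    GlobThreshWith A B τ ∧ B.rank = r }

/-- Sign rank of a `±1` matrix `M`: the minimum rank of a real matrix whose
entries have the same sign as those of `M`. -/
noncomputable def signRank {m n : ℕ} (M : Matrix (Fin m) (Fin n) ℝ) : ℕ :=
  sInf { r | ∃ B : Matrix (Fin m) (Fin n) ℝ,
    (∀ i j, Real.sign (B i j) = M i j) ∧ B.rank = r }

/-- The `±1` matrix `2A - 1ₘₓₙ` associated to a binary matrix `A`
(`1ₘₓₙ` is the all-ones matrix). -/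
def signMat {m n : ℕ} (A : Matrix (Fin m) (Fin n) ℝ) : Matrix (Fin m) (Fin n) ℝ :=
  Matrix.of fun i j => 2 * A i j - 1

/-! Subtracting the rank-one matrix `τ 1ᵀ` of row thresholds from a row-wise thresholdable
matrix leaves a matrix with the sign pattern of `2A - 1`, which costs at most one in rank.
A sign pattern of `2A - 1` is globally thresholdable at `0`, and a global threshold is a constant
row threshold. For binary `A`, row-wise order preservation says that in each row the finitely many
entries over the `1`s exceed those over the `0`s, so a row threshold fits in the gap. -/

theorem Real.pos_of_sign_eq_one {x : ℝ} (h : Real.sign x = 1) : 0 < x := by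
  rcases lt_trichotomy x 0 with hx | rfl | hx
  · rw [Real.sign_of_neg hx] at h; norm_num at h
  · rw [Real.sign_zero] at h; norm_num at h
  · exact hx

theorem Real.neg_of_sign_eq_neg_one {x : ℝ} (h : Real.sign x = -1) : x < 0 := by
  rcases lt_trichotomy x 0 with hx | rfl | hx
  · exact hx
  · rw [Real.sign_zero] at h; norm_num at h
  · rw [Real.sign_of_pos hx] at h; norm_num at h

namespace Matrix

variable {m n K : Type*} [Fintype n] [Field K]

theorem rank_add_le [Fintype m] (B C : Matrix m n K) : (B + C).rank ≤ B.rank + C.rank := by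
  have hrange : LinearMap.range (B + C).mulVecLin ≤
      LinearMap.range B.mulVecLin ⊔ LinearMap.range C.mulVecLin := by
    rw [Matrix.mulVecLin_add]
    rintro _ ⟨v, rfl⟩
    exact Submodule.add_mem_sup ⟨v, rfl⟩ ⟨v, rfl⟩
  exact (Submodule.finrank_mono hrange).trans (Submodule.finrank_add_le_finrank_add_finrank _ _)

theorem rank_sub_vecMulVec_le [Fintype m] (B : Matrix m n K) (w : m → K) (v : n → K) :
    (B - vecMulVec w v).rank ≤ B.rank + 1 := by
  rw [sub_eq_add_neg, ← neg_vecMulVec]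
  exact (rank_add_le _ _).trans (Nat.add_le_add_left (rank_vecMulVec_le _ _) _)

end Matrix

section Thresholds

variable {m n : ℕ} {A B : Matrix (Fin m) (Fin n) ℝ}

theorem signMat_apply (A : Matrix (Fin m) (Fin n) ℝ) (i : Fin m) (j : Fin n) :
    signMat A i j = 2 * A i j - 1 :=
  rfl

theorem globThreshWith_self_half (A : Matrix (Fin m) (Fin n) ℝ) : GlobThreshWith A A (1 / 2) :=
  fun i j => ⟨fun h => by rw [h]; norm_num, fun h => by rw [h]; norm_num⟩

theorem GlobThreshWith.rowThreshWith {τ : ℝ} (h : GlobThreshWith A B τ) :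
    RowThreshWith A B fun _ => τ :=
  h

theorem rowThreshWith_iff_globThreshWith_sub {τ : Fin m → ℝ} :
    RowThreshWith A B τ ↔ GlobThreshWith A (B - vecMulVec τ fun _ => 1) 0 := by
  simp only [RowThreshWith, GlobThreshWith, Matrix.sub_apply, vecMulVec_apply, mul_one, sub_pos,
    sub_neg, gt_iff_lt]

theorem IsBinary.rowOP_iff_exists_rowThreshWith (hA : IsBinary A) :
    RowOP A B ↔ ∃ τ, RowThreshWith A B τ := by
  constructor
  · intro hB
    have hrow : ∀ i, ∃ t, (∀ x ∈ B i '' {j | A i j = 0}, x < t) ∧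
        ∀ y ∈ B i '' {j | A i j = 1}, t < y := by
      intro i
      refine (Set.toFinite _).exists_between' (Set.toFinite _) ?_
      rintro _ ⟨k, hk : A i k = 0, rfl⟩ _ ⟨j, hj : A i j = 1, rfl⟩
      exact hB i j k (by rw [hj, hk]; norm_num)
    choose τ hτ using hrow
    exact ⟨τ, fun i j => ⟨fun h => (hτ i).2 _ ⟨j, h, rfl⟩, fun h => (hτ i).1 _ ⟨j, h, rfl⟩⟩⟩
  · rintro ⟨τ, hτ⟩ i j k hjk
    rcases hA i j with hj | hj <;> rcases hA i k with hk | hk <;> rw [hj, hk] at hjk <;>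
      norm_num at hjk
    exact ((hτ i k).2 hk).trans ((hτ i j).1 hj)

theorem IsBinary.sign_eq_signMat_iff (hA : IsBinary A) :
    (∀ i j, Real.sign (B i j) = signMat A i j) ↔ GlobThreshWith A B 0 := by
  refine ⟨fun hB i j => ⟨fun h => Real.pos_of_sign_eq_one ?_,
    fun h => Real.neg_of_sign_eq_neg_one ?_⟩, fun hB i j => ?_⟩
  · rw [hB, signMat_apply, h]; norm_num
  · rw [hB, signMat_apply, h]; norm_num
  · rcases hA i j with h | h
    · rw [Real.sign_of_neg ((hB i j).2 h), signMat_apply, h]; norm_num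
    · rw [Real.sign_of_pos ((hB i j).1 h), signMat_apply, h]; norm_num

end Thresholds

section Ranks

variable {m n : ℕ} {A : Matrix (Fin m) (Fin n) ℝ}

theorem IsBinary.ropRank_eq_rtRank (hA : IsBinary A) : ropRank A = rtRank A := by
  simp only [ropRank, rtRank, hA.rowOP_iff_exists_rowThreshWith, exists_and_right]

theorem rtRank_le_gtRank (A : Matrix (Fin m) (Fin n) ℝ) : rtRank A ≤ gtRank A :=
  csInf_le_csInf (OrderBot.bddBelow _) ⟨A.rank, A, 1 / 2, globThreshWith_self_half A, rfl⟩
    fun _ ⟨B, _, hB, hr⟩ => ⟨B, _, hB.rowThreshWith, hr⟩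

theorem IsBinary.gtRank_le_signRank (hA : IsBinary A) : gtRank A ≤ signRank (signMat A) := by
  have hsignMat : GlobThreshWith A (signMat A) 0 := fun i j =>
    ⟨fun h => by rw [signMat_apply, h]; norm_num, fun h => by rw [signMat_apply, h]; norm_num⟩
  exact csInf_le_csInf (OrderBot.bddBelow _)
    ⟨_, signMat A, hA.sign_eq_signMat_iff.2 hsignMat, rfl⟩
    fun _ ⟨B, hB, hr⟩ => ⟨B, 0, hA.sign_eq_signMat_iff.1 hB, hr⟩

theorem IsBinary.signRank_le_ropRank_add_one (hA : IsBinary A) :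
    signRank (signMat A) ≤ ropRank A + 1 := by
  obtain ⟨B, hB, hrank⟩ :
      ropRank A ∈ {r | ∃ B : Matrix (Fin m) (Fin n) ℝ, RowOP A B ∧ B.rank = r} :=
    Nat.sInf_mem ⟨A.rank, A, fun _ _ _ h => h, rfl⟩
  obtain ⟨τ, hτ⟩ := hA.rowOP_iff_exists_rowThreshWith.1 hB
  calc signRank (signMat A) ≤ (B - vecMulVec τ fun _ => 1).rank :=
        Nat.sInf_le ⟨_, hA.sign_eq_signMat_iff.2 (rowThreshWith_iff_globThreshWith_sub.1 hτ), rfl⟩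
    _ ≤ B.rank + 1 := rank_sub_vecMulVec_le _ _ _
    _ = ropRank A + 1 := by rw [hrank]

end Ranks

theorem rank_inequality_chain {m n : ℕ} (A : Matrix (Fin m) (Fin n) ℝ)
    (hA : IsBinary A) :
    signRank (signMat A) - 1 ≤ ropRank A ∧
      ropRank A = rtRank A ∧
      rtRank A ≤ gtRank A ∧
      gtRank A ≤ signRank (signMat A) :=
  ⟨Nat.sub_le_of_le_add hA.signRank_le_ropRank_add_one, hA.ropRank_eq_rtRank,
    rtRank_le_gtRank A, hA.gtRank_le_signRank⟩
end

section
/- Let A ∈ {0,1}^{m×n} be a binary matrix and suppose there exist an integer d and vectors u_1, …, u_m ∈ ℝ^d and v_1, …, v_n ∈ ℝ^d such that the score matrix B with B_{ij} = ⟨u_i, v_j⟩ is row-wise order-preserving for A (for all i, j, k, A_{ij} > A_{ik} implies ⟨u_i, v_j⟩ > ⟨u_i, v_k⟩). Then there exists a real matrix C ∈ ℝ^{m×n} of rank at most d + 1 such that C_{ij} > 0 when A_{ij} = 1 and C_{ij} < 0 when A_{ij} = 0; that is, the sign rank of 2A − 1_{m×n} is at most d + 1. -/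
open Matrix

/-
In each row, every score of a `1` exceeds every score of a `0`, so the rows can be cut by one
threshold `τ i` each. Appending the coordinate `-τ i` to `u i` and `1` to `v j` realises
`u i ⬝ᵥ v j - τ i` as a dot product in dimension `d + 1`, and this matrix has the sign pattern
of `2A - 1`.
-/

theorem Matrix.rank_of_dotProduct_le {R m n : Type*} [CommRing R] [StrongRankCondition R]
    [Fintype n] {k : ℕ} (x : m → Fin k → R) (y : n → Fin k → R) :
    (of fun i j => x i ⬝ᵥ y j).rank ≤ k := by
  have hfactor : (of fun i j => x i ⬝ᵥ y j) = of x * (of y)ᵀ := by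
    ext i j
    rfl
  rw [hfactor]
  exact (rank_mul_le_left _ _).trans ((rank_le_card_width _).trans (Fintype.card_fin k).le)

theorem Matrix.rank_of_dotProduct_sub_le {R m n : Type*} [CommRing R] [StrongRankCondition R]
    [Fintype n] {k : ℕ} (x : m → Fin k → R) (y : n → Fin k → R) (τ : m → R) :
    (of fun i j => x i ⬝ᵥ y j - τ i).rank ≤ k + 1 := by
  have hlift : (of fun i j => x i ⬝ᵥ y j - τ i) =
      of fun i j => vecCons (-τ i) (x i) ⬝ᵥ vecCons 1 (y j) := by
    ext i j
    simp only [of_apply, cons_dotProduct_cons]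
    ring
  rw [hlift]
  exact rank_of_dotProduct_le _ _

theorem RowOP.exists_rowThreshWith {m n : ℕ} {A B : Matrix (Fin m) (Fin n) ℝ}
    (h : RowOP A B) : ∃ τ, RowThreshWith A B τ := by
  have hrow : ∀ i, ∃ t, (∀ x ∈ B i '' {k | A i k = 0}, x < t) ∧
      ∀ y ∈ B i '' {j | A i j = 1}, t < y := fun i =>
    Set.Finite.exists_between' (Set.toFinite _) (Set.toFinite _) <| by
      rintro _ ⟨k, hk, rfl⟩ _ ⟨j, hj, rfl⟩
      exact h i j k (by rw [show A i j = 1 from hj, show A i k = 0 from hk]; norm_num)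
  choose τ hτ using hrow
  exact ⟨τ, fun i j => ⟨fun hj => (hτ i).2 _ ⟨j, hj, rfl⟩, fun hj => (hτ i).1 _ ⟨j, hj, rfl⟩⟩⟩

theorem RowThreshWith.globThreshWith_sub {m n : ℕ} {A B : Matrix (Fin m) (Fin n) ℝ}
    {τ : Fin m → ℝ} (h : RowThreshWith A B τ) :
    GlobThreshWith A (of fun i j => B i j - τ i) 0 := fun i j =>
  ⟨fun hj => sub_pos.mpr ((h i j).1 hj), fun hj => sub_neg.mpr ((h i j).2 hj)⟩

theorem signRank_signMat_le_rank {m n : ℕ} {A C : Matrix (Fin m) (Fin n) ℝ}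
    (hA : IsBinary A) (hC : GlobThreshWith A C 0) : signRank (signMat A) ≤ C.rank := by
  refine Nat.sInf_le ⟨C, fun i j => ?_, rfl⟩
  rcases hA i j with hj | hj
  · rw [Real.sign_of_neg ((hC i j).2 hj), signMat, of_apply, hj]
    norm_num
  · rw [Real.sign_of_pos ((hC i j).1 hj), signMat, of_apply, hj]
    norm_num

theorem embedding_dim_bounds_signRank {m n : ℕ} (A : Matrix (Fin m) (Fin n) ℝ)
    (hA : IsBinary A) (d : ℕ) (u : Fin m → Fin d → ℝ) (v : Fin n → Fin d → ℝ)
    (h : RowOP A (Matrix.of fun i j => u i ⬝ᵥ v j)) :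
    (∃ C : Matrix (Fin m) (Fin n) ℝ, C.rank ≤ d + 1 ∧
        ∀ i j, (A i j = 1 → C i j > 0) ∧ (A i j = 0 → C i j < 0)) ∧
      signRank (signMat A) ≤ d + 1 := by
  obtain ⟨τ, hτ⟩ := h.exists_rowThreshWith
  have hsign : GlobThreshWith A (of fun i j => u i ⬝ᵥ v j - τ i) 0 := hτ.globThreshWith_sub
  have hrank := rank_of_dotProduct_sub_le u v τ
  exact ⟨⟨_, hrank, hsign⟩, (signRank_signMat_le_rank hA hsign).trans hrank⟩
end

section
/- For every positive integer d there exist positive integers m, n and a binary matrix A ∈ {0,1}^{m×n} such that no real matrix B ∈ ℝ^{m×n} of rank at most d is row-wise order-preserving for A; equivalently, rank_rop A > d, so no d-dimensional vector embedding of the m queries and n documents can order all relevant documents before all irrelevant ones in every row. -/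
/-!
Let `A` be the `2 ^ (d + 2) × (d + 2)` matrix whose rows are all 0/1 patterns. If `B` is row-wise
order-preserving for `A`, its `d + 2` columns are affinely independent: otherwise Radon's theorem
splits them into parts `I`, `Iᶜ` whose convex hulls meet, whereas on the row of `A` with pattern
`I` the corresponding coordinate functional takes larger values on the columns in `I` than on
those in `Iᶜ`. Affinely independent `d + 2` points in the column space force `rank B ≥ d + 1`.
-/

open Matrix

theorem Matrix.card_le_rank_add_one_of_affineIndependent_col {m n K : Type*} [Fintype m]
    [Fintype n] [Field K] {B : Matrix m n K} (hB : AffineIndependent K B.col) :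
    Fintype.card n ≤ B.rank + 1 := by
  have hspan : vectorSpan K (Set.range B.col) ≤ Submodule.span K (Set.range B.col) := by
    rw [vectorSpan_def, Submodule.span_le]
    rintro _ ⟨a, ha, b, hb, rfl⟩
    exact sub_mem (Submodule.subset_span ha) (Submodule.subset_span hb)
  calc Fintype.card n ≤ Module.finrank K (vectorSpan K (Set.range B.col)) + 1 :=
        hB.card_le_finrank_succ
    _ ≤ B.rank + 1 := by
        rw [rank_eq_finrank_span_cols]
        exact Nat.add_le_add_right (Submodule.finrank_mono hspan) 1

theorem disjoint_convexHull_of_lt {𝕜 E : Type*} [Field 𝕜] [LinearOrder 𝕜]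
    [IsStrictOrderedRing 𝕜] [AddCommGroup E] [Module 𝕜 E] (f : E →ₗ[𝕜] 𝕜) {s t : Set E}
    (hst : ∀ a ∈ s, ∀ b ∈ t, f b < f a) : Disjoint (convexHull 𝕜 s) (convexHull 𝕜 t) := by
  have hs : ∀ b ∈ t, convexHull 𝕜 s ⊆ {x | f b < f x} := fun b hb =>
    convexHull_min (fun a ha => hst a ha b hb) (convex_halfSpace_gt f.isLinear (f b))
  have ht : ∀ x ∈ convexHull 𝕜 s, convexHull 𝕜 t ⊆ {y | f y < f x} := fun x hx =>
    convexHull_min (fun b hb => hs b hb hx) (convex_halfSpace_lt f.isLinear (f x))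
  exact Set.disjoint_left.2 fun x hxs hxt => lt_irrefl _ (ht x hxs hxt)

/-- Row `i` lists the binary digits of `i`, so every 0/1 pattern on `n` columns is a row. -/
def allPatterns (n : ℕ) : Matrix (Fin (2 ^ n)) (Fin n) ℝ :=
  of fun i j => if finFunctionFinEquiv.symm i j = 1 then 1 else 0

theorem isBinary_allPatterns (n : ℕ) : IsBinary (allPatterns n) := fun i j => by
  simp only [allPatterns, of_apply]
  split_ifs <;> simp

theorem exists_allPatterns_row (n : ℕ) (I : Set (Fin n)) :
    ∃ i, ∀ j, allPatterns n i j = I.indicator 1 j := by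
  classical
  refine ⟨finFunctionFinEquiv fun j => if j ∈ I then 1 else 0, fun j => ?_⟩
  by_cases hj : j ∈ I <;> simp [allPatterns, hj]

theorem affineIndependent_col_of_rowOP {n : ℕ} {B : Matrix (Fin (2 ^ n)) (Fin n) ℝ}
    (hB : RowOP (allPatterns n) B) : AffineIndependent ℝ B.col := by
  by_contra hdep
  obtain ⟨I, hI⟩ := Convex.radon_partition hdep
  obtain ⟨i, hi⟩ := exists_allPatterns_row n I
  refine Set.not_nonempty_iff_eq_empty.2 (Set.disjoint_iff_inter_eq_empty.1
    (disjoint_convexHull_of_lt (LinearMap.proj i) ?_)) hI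
  rintro _ ⟨j, hj, rfl⟩ _ ⟨k, hk, rfl⟩
  exact hB i j k (by simp [hi, hj, Set.indicator_of_notMem hk])

theorem le_ropRank {m n r : ℕ} {A : Matrix (Fin m) (Fin n) ℝ}
    (h : ∀ B, RowOP A B → r ≤ B.rank) : r ≤ ropRank A :=
  le_csInf ⟨A.rank, A, fun _ _ _ => id, rfl⟩ fun _ ⟨B, hB, hr⟩ => hr ▸ h B hB

theorem exists_hard_binary_matrix_general (d : ℕ) :
    ∃ (m n : ℕ) (A : Matrix (Fin m) (Fin n) ℝ), IsBinary A ∧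
      (∀ B : Matrix (Fin m) (Fin n) ℝ, B.rank ≤ d → ¬ RowOP A B) ∧
      d < ropRank A := by
  have hrank (B) (hB : RowOP (allPatterns (d + 2)) B) : d + 1 ≤ B.rank := by
    simpa using card_le_rank_add_one_of_affineIndependent_col (affineIndependent_col_of_rowOP hB)
  exact ⟨_, _, allPatterns (d + 2), isBinary_allPatterns _,
    fun B hBd hB => by have := hrank B hB; omega, le_ropRank hrank⟩

theorem exists_hard_binary_matrix (d : ℕ) (hd : 0 < d) :
    ∃ (m n : ℕ) (A : Matrix (Fin m) (Fin n) ℝ), IsBinary A ∧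
      (∀ B : Matrix (Fin m) (Fin n) ℝ, B.rank ≤ d → ¬ RowOP A B) ∧
      d < ropRank A :=
  exists_hard_binary_matrix_general d
end
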